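/- Let σ be the class in PGL₂(ℚ) of the matrix with rows (1,1),(0,1) and τ the class of the matrix with rows (3,0),(0,1). Let B be the subgroup of PGL₂(ℚ) consisting of all classes of matrices of the form with rows (1,c),(0,1) for c ∈ ℚ (the parabolic transformations z ↦ z + c). If H is any subgroup of PGL₂(ℚ) containing both σ and τ, then the subgroup H ∩ B is not finitely generated as a group. -/

import Mathlib

open Matrix

noncomputable section

/-- The projective line `ℙ¹(K)` over a field `K`, as the projectivization of `K²`. -/
abbrev P1 (K : Type*) [Field K] : Type _ := Projectivization K (Fin 2 → K)

/-- `PGL₂(K)`: the quotient of `GL₂(K)` by its center. -/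
abbrev PGL2 (K : Type*) [Field K] : Type _ :=
  GL (Fin 2) K ⧸ Subgroup.center (GL (Fin 2) K)

namespace PGL2

variable {K : Type*} [Field K]

/-- The linear automorphism of `K²` attached to an element of `GL₂(K)`. -/
def glEquiv (g : GL (Fin 2) K) : (Fin 2 → K) ≃ₗ[K] (Fin 2 → K) :=
  (Matrix.GeneralLinearGroup.toLin g).toLinearEquiv

lemma glEquiv_apply (g : GL (Fin 2) K) (v : Fin 2 → K) :
    glEquiv g v = (g : Matrix (Fin 2) (Fin 2) K).mulVec v := rfl

/-- `GL₂(K)` acts on `ℙ¹(K)` by Möbius transformations. -/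
instance : SMul (GL (Fin 2) K) (P1 K) :=
  ⟨fun g => Projectivization.map (glEquiv g).toLinearMap (glEquiv g).injective⟩

lemma gl_smul_mk (g : GL (Fin 2) K) (v : Fin 2 → K) (hv : v ≠ 0) :
    g • Projectivization.mk K v hv
      = Projectivization.mk K ((g : Matrix (Fin 2) (Fin 2) K).mulVec v)
          (fun h => hv ((glEquiv g).injective (by rw [map_zero]; exact h))) :=
  Projectivization.map_mk (glEquiv g).toLinearMap (glEquiv g).injective v hv

instance : MulAction (GL (Fin 2) K) (P1 K) where
  one_smul x := by
    induction x using Projectivization.ind with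
    | h v hv => rw [gl_smul_mk]; simp
  mul_smul g h x := by
    induction x using Projectivization.ind with
    | h v hv => rw [gl_smul_mk, gl_smul_mk, gl_smul_mk]; simp only [Units.val_mul, Matrix.mulVec_mulVec]

lemma exists_scalar_of_mem_center (g : GL (Fin 2) K)
    (hg : g ∈ Subgroup.center (GL (Fin 2) K)) :
    ∃ a : K, (g : Matrix (Fin 2) (Fin 2) K) = a • (1 : Matrix (Fin 2) (Fin 2) K) := by
  have hmem := Subgroup.mem_center_iff.mp hg
  set A : Matrix (Fin 2) (Fin 2) K := (g : Matrix (Fin 2) (Fin 2) K) with hA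
  have hUdet : ((!![1, 1; 0, 1] : Matrix (Fin 2) (Fin 2) K)).det ≠ 0 := by
    norm_num [Matrix.det_fin_two_of]
  have hLdet : ((!![1, 0; 1, 1] : Matrix (Fin 2) (Fin 2) K)).det ≠ 0 := by
    norm_num [Matrix.det_fin_two_of]
  have hU := congrArg Units.val (hmem (Matrix.GeneralLinearGroup.mkOfDetNeZero _ hUdet))
  have hL := congrArg Units.val (hmem (Matrix.GeneralLinearGroup.mkOfDetNeZero _ hLdet))
  have hU' : (!![1, 1; 0, 1] : Matrix (Fin 2) (Fin 2) K) * A = A * !![1, 1; 0, 1] := hU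
  have hL' : (!![1, 0; 1, 1] : Matrix (Fin 2) (Fin 2) K) * A = A * !![1, 0; 1, 1] := hL
  have e1 := congrFun (congrFun hU' 0) 0
  have e2 := congrFun (congrFun hU' 0) 1
  have e3 := congrFun (congrFun hL' 0) 0
  simp [Matrix.mul_apply, Fin.sum_univ_two] at e1 e2 e3
  refine ⟨A 0 0, ?_⟩
  ext i j
  fin_cases i <;> fin_cases j <;>
    simp [Matrix.one_apply] <;> first | exact e3 | exact e1 | linear_combination e2



lemma center_smul_eq (g : GL (Fin 2) K) (hg : g ∈ Subgroup.center (GL (Fin 2) K))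
    (x : P1 K) : g • x = x := by
  obtain ⟨a, hA⟩ := exists_scalar_of_mem_center g hg
  have ha : a ≠ 0 := by
    intro h
    subst h
    have : IsUnit (g : Matrix (Fin 2) (Fin 2) K).det := ⟨Matrix.GeneralLinearGroup.det g, rfl⟩
    rw [hA] at this
    simp at this
  induction x using Projectivization.ind with
  | h v hv =>
    rw [gl_smul_mk]
    rw [Projectivization.mk_eq_mk_iff]
    exact ⟨Units.mk0 a ha, by simp [hA]; ext i; fin_cases i <;> simp⟩

/-- `PGL₂(K)` acts on `ℙ¹(K)` by Möbius transformations. -/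
def toPerm : PGL2 K →* Equiv.Perm (P1 K) :=
  QuotientGroup.lift _ (MulAction.toPermHom (GL (Fin 2) K) (P1 K))
    (fun g hg => Equiv.ext fun x => center_smul_eq g hg x)

instance : SMul (PGL2 K) (P1 K) := ⟨fun g x => toPerm g x⟩

lemma smul_def (g : PGL2 K) (x : P1 K) : g • x = toPerm g x := rfl

instance : MulAction (PGL2 K) (P1 K) where
  one_smul x := by simp [smul_def]
  mul_smul g h x := by simp [smul_def]

/-- The class in `PGL₂(K)` of a matrix with nonzero determinant. -/
def cls (M : Matrix (Fin 2) (Fin 2) K) (h : M.det ≠ 0) : PGL2 K :=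
  QuotientGroup.mk (Matrix.GeneralLinearGroup.mkOfDetNeZero M h)

lemma cls_smul_mk (M : Matrix (Fin 2) (Fin 2) K) (h : M.det ≠ 0) (v : Fin 2 → K)
    (hv : v ≠ 0) (hMv : M.mulVec v ≠ 0) :
    cls M h • Projectivization.mk K v hv = Projectivization.mk K (M.mulVec v) hMv := by
  rw [smul_def, cls]
  show (Matrix.GeneralLinearGroup.mkOfDetNeZero M h) • Projectivization.mk K v hv = _
  rw [gl_smul_mk]
  rfl

lemma vec_ne_zero (a : K) : ![a, (1 : K)] ≠ 0 := fun h => by simpa using congrFun h 1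

/-- The affine point `[z : 1]` of `ℙ¹(K)`. -/
def affPt (z : K) : P1 K := Projectivization.mk K ![z, 1] (vec_ne_zero z)

/-- The point `[a : b]` of `ℙ¹(K)`. -/
def pt (a b : K) (h : ![a, b] ≠ 0) : P1 K := Projectivization.mk K ![a, b] h

end PGL2


open PGL2

/-- The parabolic transformation `z ↦ z + c` as an element of `PGL₂(ℚ)`. -/
noncomputable def uni (c : ℚ) : PGL2 ℚ :=
  cls !![(1 : ℚ), c; 0, 1] (by norm_num [Matrix.det_fin_two_of])

lemma cls_mul {M N : Matrix (Fin 2) (Fin 2) ℚ} (hM : M.det ≠ 0) (hN : N.det ≠ 0)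
    (hMN : (M * N).det ≠ 0) : cls M hM * cls N hN = cls (M * N) hMN := by
  rw [cls, cls, cls, ← QuotientGroup.mk_mul]
  congr 1
  exact Units.ext rfl

lemma cls_congr {M N : Matrix (Fin 2) (Fin 2) ℚ} (h : M = N) (hM : M.det ≠ 0)
    (hN : N.det ≠ 0) : cls M hM = cls N hN := by subst h; rfl

lemma uni_mul (c d : ℚ) : uni c * uni d = uni (c + d) := by
  rw [uni, uni, uni, cls_mul _ _ (by norm_num [Matrix.det_fin_two_of, Matrix.mul_fin_two])]
  exact cls_congr (by rw [Matrix.mul_fin_two]; norm_num [add_comm]) _ _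

lemma uni_zero : uni 0 = 1 := by
  have h1 : (!![(1 : ℚ), 0; 0, 1]) = (1 : Matrix (Fin 2) (Fin 2) ℚ) := by
    ext i j
    fin_cases i <;> fin_cases j <;> simp [Matrix.one_apply]
  rw [uni, cls_congr h1 _ (by norm_num), cls]
  have : Matrix.GeneralLinearGroup.mkOfDetNeZero (1 : Matrix (Fin 2) (Fin 2) ℚ)
      (by norm_num) = 1 := Units.ext rfl
  rw [this]
  rfl

/-- `B ⊂ PGL₂(ℚ)`: the subgroup of all classes of unipotent upper triangular matrices,
i.e. of the parabolic transformations `z ↦ z + c`. -/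
noncomputable def B : Subgroup (PGL2 ℚ) where
  carrier := {x : PGL2 ℚ | ∃ c : ℚ, x = uni c}
  one_mem' := ⟨0, uni_zero.symm⟩
  mul_mem' := by
    rintro x y ⟨c, rfl⟩ ⟨d, rfl⟩
    exact ⟨c + d, uni_mul c d⟩
  inv_mem' := by
    rintro x ⟨c, rfl⟩
    exact ⟨-c, inv_eq_of_mul_eq_one_right (by rw [uni_mul]; simp [uni_zero])⟩


/-! Since `τ * (z ↦ z + c) = (z ↦ z + 3c) * τ`, conjugating `σ` by powers of `τ` puts every
translation `z ↦ z + 3⁻ⁿ` into `H ∩ B`. Through the injective homomorphism `c ↦ (z ↦ z + c)`,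
`H ∩ B` is a subgroup of `(ℚ, +)`. A finitely generated subgroup of `ℚ` lies in `(1/N)ℤ`, `N` the
product of the denominators of its generators, and `3⁻ᴺ ∉ (1/N)ℤ` because `3ᴺ > N`. -/

@[to_additive]
theorem Subgroup.FG.comap_of_le_range {G G' : Type*} [Group G] [Group G'] {f : G →* G'}
    (hf : Function.Injective f) {K : Subgroup G'} (hK : K ≤ f.range) (h : K.FG) :
    (K.comap f).FG := by
  rw [Subgroup.fg_iff_submonoid_fg] at h ⊢
  refine Submonoid.FG.map_injective f hf ?_
  rwa [← Subgroup.map_toSubmonoid, Subgroup.map_comap_eq_self hK]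

theorem AddSubgroup.FG.exists_le_zmultiples_inv {S : AddSubgroup ℚ} (h : S.FG) :
    ∃ N : ℕ, 0 < N ∧ S ≤ AddSubgroup.zmultiples (N : ℚ)⁻¹ := by
  obtain ⟨T, rfl⟩ := h
  have hN : 0 < ∏ q ∈ T, q.den := Finset.prod_pos fun q _ => q.pos
  refine ⟨_, hN, (AddSubgroup.closure_le _).2 fun q hq => ?_⟩
  obtain ⟨k, hk⟩ := Finset.dvd_prod_of_mem Rat.den (Finset.mem_coe.1 hq)
  have hk0 : (k : ℚ) ≠ 0 := Nat.cast_ne_zero.2 (right_ne_zero_of_mul (hk ▸ hN.ne'))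
  refine ⟨q.num * k, ?_⟩
  simp only [hk, zsmul_eq_mul]
  push_cast
  field_simp
  exact (Rat.den_mul_eq_num q).symm

theorem AddSubgroup.not_fg_of_inv_pow_mem {S : AddSubgroup ℚ} {p : ℕ} (hp : 1 < p)
    (h : ∀ n : ℕ, ((p : ℚ) ^ n)⁻¹ ∈ S) : ¬ S.FG := by
  intro hS
  obtain ⟨N, hN, hle⟩ := hS.exists_le_zmultiples_inv
  obtain ⟨m, hm⟩ := AddSubgroup.mem_zmultiples_iff.1 (hle (h N))
  have hdvd : ((p ^ N : ℕ) : ℤ) ∣ N := by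
    refine ⟨m, ?_⟩
    rw [zsmul_eq_mul] at hm
    field_simp at hm
    rw [mul_comm]
    exact_mod_cast hm.symm
  have hpow_le : ((p ^ N : ℕ) : ℤ) ≤ N := Int.le_of_dvd (by exact_mod_cast hN) hdvd
  have hlt_pow : N < p ^ N := Nat.lt_pow_self hp
  omega

theorem cls_diag_mul_uni (a c : ℚ) (ha : !![a, 0; 0, 1].det ≠ 0) :
    cls !![a, 0; 0, 1] ha * uni c = uni (a * c) * cls !![a, 0; 0, 1] ha := by
  rw [uni, uni, cls_mul _ _ (by simpa using ha), cls_mul _ _ (by simpa using ha)]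
  congr 1
  simp

def uniHom : ℚ →+ Additive (PGL2 ℚ) :=
  AddMonoidHom.mk' (fun c => Additive.ofMul (uni c)) fun c d =>
    congrArg Additive.ofMul (uni_mul c d).symm

theorem uniHom_injective : Function.Injective uniHom := by
  refine (injective_iff_map_eq_zero uniHom).2 fun c hc => ?_
  obtain ⟨a, ha⟩ := exists_scalar_of_mem_center _ ((QuotientGroup.eq_one_iff _).1 hc)
  simpa using congrFun (congrFun ha 0) 1

theorem range_uniHom : uniHom.range = B.toAddSubgroup := by
  ext x
  exact ⟨fun ⟨c, hc⟩ => ⟨c, hc ▸ rfl⟩,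
    fun ⟨c, hc⟩ => ⟨c, congrArg Additive.ofMul hc.symm⟩⟩

theorem uni_div_pow_mem {H : Subgroup (PGL2 ℚ)} {a c : ℚ} (ha : !![a, 0; 0, 1].det ≠ 0)
    (hd : cls !![a, 0; 0, 1] ha ∈ H) (hc : uni c ∈ H) (n : ℕ) : uni (c / a ^ n) ∈ H := by
  have ha0 : a ≠ 0 := by simpa using ha
  induction n with
  | zero => simpa using hc
  | succ n ih =>
    have hconj : uni (c / a ^ (n + 1))
        = (cls !![a, 0; 0, 1] ha)⁻¹ * (uni (c / a ^ n) * cls !![a, 0; 0, 1] ha) := by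
      refine eq_inv_mul_of_mul_eq ?_
      rw [cls_diag_mul_uni]
      congr 2
      field_simp
      ring
    rw [hconj]
    exact mul_mem (inv_mem hd) (mul_mem ih hd)

/-- If a subgroup `H` of `PGL₂(ℚ)` contains `σ : z ↦ z + 1` and `τ : z ↦ 3z`, then
`H ∩ B` is not finitely generated. -/
theorem inf_parabolic_not_fg (H : Subgroup (PGL2 ℚ))
    (hσ : cls !![(1 : ℚ), 1; 0, 1] (by norm_num [Matrix.det_fin_two_of]) ∈ H)
    (hτ : cls !![(3 : ℚ), 0; 0, 1] (by norm_num [Matrix.det_fin_two_of]) ∈ H) :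
    ¬ (H ⊓ B).FG := by
  intro hfg
  refine AddSubgroup.not_fg_of_inv_pow_mem (S := (H ⊓ B).toAddSubgroup.comap uniHom) (p := 3)
    (by norm_num) (fun n => ?_) ?_
  · have hmem := uni_div_pow_mem _ hτ hσ n
    exact ⟨show uni _ ∈ H by simpa using hmem, _, rfl⟩
  · refine ((Subgroup.fg_iff_add_fg _).1 hfg).comap_of_le_range uniHom_injective ?_
    rw [range_uniHom]
    exact Subgroup.toAddSubgroup.monotone inf_le_right
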